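/- If m ≥ 2^{n-1} - 1, then RBM_{n,m} = P({0,1}^n); that is, an RBM with n visible units and at least 2^{n-1} - 1 hidden units is a universal approximator: every probability distribution on {0,1}^n can be approximated arbitrarily well by visible distributions of the RBM. -/

import Mathlib

open scoped BigOperators

noncomputable section

/-- The real value of a Boolean. -/
def bval (b : Bool) : ℝ := if b then 1 else 0

/-- `p` is a probability distribution on the finite set `X`. -/
def IsProb {X : Type*} [Fintype X] (p : X → ℝ) : Prop :=
  (∀ x, 0 ≤ p x) ∧ ∑ x, p x = 1

/-- One term of the Kullback-Leibler divergence (base-2 logarithm); terms with `a = 0` are `0`. -/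
noncomputable def klTerm (a b : ℝ) : ℝ := if a = 0 then 0 else a * Real.logb 2 (a / b)

/-- Kullback-Leibler divergence with base-2 logarithm; it is `⊤ = ∞` if the support of `q`
does not contain the support of `p`. -/
noncomputable def KL {X : Type*} [Fintype X] (p q : X → ℝ) : EReal :=
  if ∀ x, p x ≠ 0 → q x ≠ 0 then ((∑ x, klTerm (p x) (q x) : ℝ) : EReal) else ⊤

/-- The divergence from `p` to a set `M` of distributions: `inf_{q ∈ M} D(p‖q)`. -/
noncomputable def KLset {X : Type*} [Fintype X] (p : X → ℝ) (M : Set (X → ℝ)) : EReal :=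
  ⨅ q ∈ M, KL p q

/-- The visible distribution `p_{W,C,B}` of an RBM with `n` visible and `m` hidden units. -/
noncomputable def rbmDist (n m : ℕ) (W : Matrix (Fin m) (Fin n) ℝ) (C : Fin m → ℝ)
    (B : Fin n → ℝ) : (Fin n → Bool) → ℝ := fun v =>
  (∑ h : Fin m → Bool,
      Real.exp ((∑ j, ∑ i, bval (h j) * W j i * bval (v i)) +
        (∑ j, C j * bval (h j)) + (∑ i, B i * bval (v i)))) /
  (∑ v' : Fin n → Bool, ∑ h : Fin m → Bool,
      Real.exp ((∑ j, ∑ i, bval (h j) * W j i * bval (v' i)) +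
        (∑ j, C j * bval (h j)) + (∑ i, B i * bval (v' i))))

/-- The RBM model `RBM_{n,m}`: the closure (in `ℝ^{{0,1}^n}`) of the set of visible
distributions representable with some choice of the parameters. -/
noncomputable def RBM (n m : ℕ) : Set ((Fin n → Bool) → ℝ) :=
  closure { p | ∃ (W : Matrix (Fin m) (Fin n) ℝ) (C : Fin m → ℝ) (B : Fin n → ℝ),
    p = rbmDist n m W C B }

/-- `p` is a product distribution on `{0,1}^n`. -/
def IsProductDist {n : ℕ} (p : (Fin n → Bool) → ℝ) : Prop :=
  ∃ f : Fin n → Bool → ℝ, (∀ i, IsProb (f i)) ∧ ∀ v, p v = ∏ i, f i (v i)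

/-- A face (cubical subset) of the `n`-cube: the coordinates outside `I` are fixed to `u`. -/
def IsFace {n : ℕ} (F : Set (Fin n → Bool)) : Prop :=
  ∃ (I : Finset (Fin n)) (u : Fin n → Bool), F = {x | ∀ i ∉ I, x i = u i}

/-- An edge of the `n`-cube: a pair of vectors differing in exactly one entry. -/
def IsEdge {n : ℕ} (E : Set (Fin n → Bool)) : Prop :=
  ∃ (x : Fin n → Bool) (i : Fin n), E = {x, Function.update x i (!x i)}

/-!
The visible weight of an RBM is `exp (B ⬝ v) * ∏ⱼ (1 + exp (Wⱼ ⬝ v + Cⱼ))`, so its normalization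
lies in the closed probability simplex. Conversely, strictly positive distributions are dense, so
let `p > 0` and write `v = (v₀, k)`. For each of the `2^(n-1) - 1` nonzero patterns `k` use one
hidden unit with pre-activation `αₖ(v₀) + s · d(tail v, k)`, `d` the Hamming distance. As
`s → -∞` its factor tends to `1 + exp αₖ(v₀)` on the edge `{(0, k), (1, k)}` and to `1`
elsewhere. The visible bias `B₀` on `v₀` fits `p` on the edge `k = 0`; a bias `-R` on the other
units, `R` large, makes every required factor `p(v₀, k) / p(0, 0) * exp (R |k| - B₀ v₀)` exceed
`1`, so it is of the form `1 + exp αₖ(v₀)`.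
-/

open Filter Topology Real

section Normalization

variable {X : Type*} [Fintype X]

lemma setOf_isProb_eq_stdSimplex : {p : X → ℝ | IsProb p} = stdSimplex ℝ X := rfl

def normalized (q : X → ℝ) : X → ℝ := fun x => q x / ∑ y, q y

lemma isProb_normalized [Nonempty X] {q : X → ℝ} (hq : ∀ x, 0 < q x) :
    IsProb (normalized q) := by
  have hsum : 0 < ∑ y, q y := Finset.sum_pos (fun x _ => hq x) Finset.univ_nonempty
  refine ⟨fun x => div_nonneg (hq x).le hsum.le, ?_⟩
  simp only [normalized, ← Finset.sum_div, div_self hsum.ne']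

lemma normalized_const_mul {c : ℝ} (hc : c ≠ 0) (q : X → ℝ) :
    normalized (fun x => c * q x) = normalized q := by
  funext x
  rw [normalized, normalized, ← Finset.mul_sum, mul_div_mul_left _ _ hc]

lemma IsProb.normalized_eq {p : X → ℝ} (hp : IsProb p) : normalized p = p := by
  funext x
  rw [normalized, hp.2, div_one]

lemma continuousAt_normalized {q : X → ℝ} (hq : ∑ y, q y ≠ 0) :
    ContinuousAt normalized q :=
  continuousAt_pi.2 fun x => (continuous_apply x).continuousAt.div
    (continuous_finsetSum _ fun y _ => continuous_apply y).continuousAt hq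

lemma IsProb.eq_of_subsingleton [Subsingleton X] {p q : X → ℝ} (hp : IsProb p)
    (hq : IsProb q) : p = q := by
  funext x
  rw [← Fintype.sum_subsingleton p x, ← Fintype.sum_subsingleton q x, hp.2, hq.2]

lemma IsProb.mem_closure_setOf_pos [Nonempty X] {p : X → ℝ} (hp : IsProb p) :
    p ∈ closure {q : X → ℝ | IsProb q ∧ ∀ x, 0 < q x} := by
  set u : X → ℝ := fun _ => (Fintype.card X : ℝ)⁻¹
  have hu_pos : ∀ x, 0 < u x := fun _ => by simp only [u]; positivity
  have hu : IsProb u := by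
    refine ⟨fun x => (hu_pos x).le, ?_⟩
    simp [u]
  refine mem_closure_of_tendsto (b := 𝓝[>] 0) (f := fun ε : ℝ => (1 - ε) • p + ε • u) ?_ ?_
  · exact ((by fun_prop : Continuous fun ε : ℝ => (1 - ε) • p + ε • u).tendsto' 0 p
      (by simp)).mono_left nhdsWithin_le_nhds
  · filter_upwards [Ioo_mem_nhdsGT one_pos] with ε ⟨hε₀, hε₁⟩
    refine ⟨convex_stdSimplex ℝ X hp hu (by linarith) hε₀.le (by ring), fun x => ?_⟩
    have := hp.1 x
    have := hu_pos x
    simp only [Pi.add_apply, Pi.smul_apply, smul_eq_mul]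
    nlinarith

end Normalization

section RBMWeight

variable {n : ℕ} {H : Type*} [Fintype H]

def rbmWeight (W : H → Fin n → ℝ) (C : H → ℝ) (B : Fin n → ℝ) (v : Fin n → Bool) : ℝ :=
  exp (∑ i, B i * bval (v i)) * ∏ j, (1 + exp (∑ i, W j i * bval (v i) + C j))

lemma rbmWeight_pos (W : H → Fin n → ℝ) (C : H → ℝ) (B : Fin n → ℝ) (v : Fin n → Bool) :
    0 < rbmWeight W C B v :=
  mul_pos (exp_pos _) (Finset.prod_pos fun _ _ => by positivity)

lemma sum_hidden_eq_rbmWeight {m : ℕ} (W : Matrix (Fin m) (Fin n) ℝ) (C : Fin m → ℝ)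
    (B : Fin n → ℝ) (v : Fin n → Bool) :
    ∑ h : Fin m → Bool, exp ((∑ j, ∑ i, bval (h j) * W j i * bval (v i)) +
      (∑ j, C j * bval (h j)) + (∑ i, B i * bval (v i))) = rbmWeight W C B v := by
  have hsplit : ∀ h : Fin m → Bool, exp ((∑ j, ∑ i, bval (h j) * W j i * bval (v i)) +
      (∑ j, C j * bval (h j)) + (∑ i, B i * bval (v i))) =
      exp (∑ i, B i * bval (v i)) *
        ∏ j, exp (bval (h j) * (∑ i, W j i * bval (v i) + C j)) := by
    intro h
    rw [← exp_sum, ← exp_add]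
    congr 1
    simp only [mul_add, Finset.mul_sum, Finset.sum_add_distrib, mul_assoc, mul_comm (C _)]
    ring
  simp only [hsplit, ← Finset.mul_sum, rbmWeight]
  rw [← Fintype.prod_sum (κ := fun _ => Bool)
    (fun j b => exp (bval b * (∑ i, W j i * bval (v i) + C j)))]
  refine congrArg _ (Finset.prod_congr rfl fun j _ => ?_)
  simp [bval, add_comm]

lemma rbmDist_eq_normalized (m : ℕ) (W : Matrix (Fin m) (Fin n) ℝ) (C : Fin m → ℝ)
    (B : Fin n → ℝ) : rbmDist n m W C B = normalized (rbmWeight W C B) := by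
  funext v
  simp only [rbmDist, normalized, sum_hidden_eq_rbmWeight]

lemma rbmDist_isProb (m : ℕ) (W : Matrix (Fin m) (Fin n) ℝ) (C : Fin m → ℝ)
    (B : Fin n → ℝ) : IsProb (rbmDist n m W C B) := by
  rw [rbmDist_eq_normalized]
  exact isProb_normalized (rbmWeight_pos W C B)

lemma RBM_subset_setOf_isProb (m : ℕ) : RBM n m ⊆ {p | IsProb p} := by
  rw [setOf_isProb_eq_stdSimplex]
  refine closure_minimal ?_ (isClosed_stdSimplex ℝ _)
  rintro _ ⟨W, C, B, rfl⟩
  exact rbmDist_isProb m W C B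

lemma rbmWeight_extend {m : ℕ} (e : H ↪ Fin m) (W : H → Fin n → ℝ) (C : H → ℝ)
    (B : Fin n → ℝ) :
    rbmWeight (Function.extend e W 0) (Function.extend e C 0) B =
      fun v => 2 ^ (m - Fintype.card H) * rbmWeight W C B v := by
  classical
  funext v
  set f : Fin m → ℝ := fun j =>
    1 + exp (∑ i, Function.extend e W 0 j i * bval (v i) + Function.extend e C 0 j)
  have himage :
      ∏ j ∈ Finset.univ.map e, f j = ∏ k, (1 + exp (∑ i, W k i * bval (v i) + C k)) := by
    simp only [Finset.prod_map, f, e.injective.extend_apply]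
  have hcompl : ∏ j ∈ (Finset.univ.map e)ᶜ, f j = 2 ^ (m - Fintype.card H) := by
    rw [Finset.prod_congr rfl fun j hj => ?_, Finset.prod_const, Finset.card_compl,
      Finset.card_map, Finset.card_univ, Fintype.card_fin]
    have hj : ¬∃ k, e k = j := by simpa using hj
    simp only [f, Function.extend_apply' _ _ _ hj]
    norm_num
  rw [rbmWeight, rbmWeight, ← Finset.prod_mul_prod_compl (Finset.univ.map e), himage, hcompl]
  ring

lemma normalized_rbmWeight_mem_RBM {m : ℕ} (hH : Fintype.card H ≤ m) (W : H → Fin n → ℝ)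
    (C : H → ℝ) (B : Fin n → ℝ) : normalized (rbmWeight W C B) ∈ RBM n m := by
  obtain ⟨e⟩ := Function.Embedding.nonempty_of_card_le (hH.trans (Fintype.card_fin m).ge)
  refine subset_closure ⟨Matrix.of (Function.extend e W 0), Function.extend e C 0, B, ?_⟩
  rw [rbmDist_eq_normalized,
    ← normalized_const_mul (by positivity : (2 : ℝ) ^ (m - Fintype.card H) ≠ 0)]
  exact congrArg normalized (rbmWeight_extend e W C B).symm

lemma normalized_mem_RBM_of_tendsto {m : ℕ} (hH : Fintype.card H ≤ m) {ι : Type*}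
    {l : Filter ι} [l.NeBot] {W : ι → H → Fin n → ℝ} {C : ι → H → ℝ} {B : ι → Fin n → ℝ}
    {q : (Fin n → Bool) → ℝ} (hq : Tendsto (fun s => rbmWeight (W s) (C s) (B s)) l (𝓝 q))
    (hsum : ∑ v, q v ≠ 0) : normalized q ∈ RBM n m :=
  isClosed_closure.mem_of_tendsto ((continuousAt_normalized hsum).tendsto.comp hq)
    (Eventually.of_forall fun s => normalized_rbmWeight_mem_RBM hH (W s) (C s) (B s))

end RBMWeight

lemma hammingDist_eq_sum_bval {ι : Type*} [Fintype ι] (x k : ι → Bool) :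
    (hammingDist x k : ℝ) = ∑ i, (if k i then -1 else 1) * bval (x i) + ∑ i, bval (k i) := by
  rw [hammingDist, Finset.natCast_card_filter, ← Finset.sum_add_distrib]
  refine Finset.sum_congr rfl fun i _ => ?_
  cases x i <;> cases k i <;> norm_num [bval]

lemma tendsto_exp_add_mul_natCast_atBot (a : ℝ) (d : ℕ) :
    Tendsto (fun s => exp (a + s * d)) atBot (𝓝 (if d = 0 then exp a else 0)) := by
  split_ifs with hd
  · simp [hd]
  · exact tendsto_exp_atBot.comp (tendsto_atBot_add_const_left _ a
      (tendsto_id.atBot_mul_const (by positivity)))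

lemma sum_bval_pos {ι : Type*} [Fintype ι] {k : ι → Bool} (hk : k ≠ fun _ => false) :
    0 < ∑ i, bval (k i) := by
  obtain ⟨i, hi⟩ := Function.ne_iff.1 hk
  refine Finset.sum_pos' (fun j _ => ?_) ⟨i, Finset.mem_univ i, ?_⟩
  · cases k j <;> simp [bval]
  · simp_all [bval]

lemma exists_forall_one_lt_mul_exp {ι : Type*} [Finite ι] {c r : ι → ℝ} (d : ι → ℝ)
    (hc : ∀ i, 0 < c i) (hr : ∀ i, 0 < r i) : ∃ R : ℝ, ∀ i, 1 < c i * exp (R * r i - d i) := by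
  refine (eventually_all.2 fun i => ?_).exists (f := atTop)
  have hexp : Tendsto (fun R => exp (R * r i - d i)) atTop atTop :=
    tendsto_exp_atTop.comp (tendsto_atTop_add_const_right _ (-d i)
      (tendsto_id.atTop_mul_const (hr i)))
  exact (hexp.const_mul_atTop (hc i)).eventually_gt_atTop 1

lemma prod_subtype_ne_ite {α M : Type*} [Fintype α] [DecidableEq α] [CommMonoid M]
    (a x : α) (f : α → M) :
    ∏ k : {k // k ≠ a}, (if k.1 = x then f k.1 else 1) = if x = a then 1 else f x := by
  split_ifs with hx
  · exact Finset.prod_eq_one fun k _ => if_neg (hx ▸ k.2)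
  · simp_rw [show ∀ k : {k // k ≠ a}, k.1 = x ↔ k = ⟨x, hx⟩ from
      fun k => ⟨fun h => Subtype.ext h, fun h => h ▸ rfl⟩]
    exact Fintype.prod_ite_eq' (⟨x, hx⟩ : {k // k ≠ a}) fun k => f k.1

section Selector

variable {n : ℕ}

abbrev NonzeroPattern (n : ℕ) := {k : Fin n → Bool // k ≠ fun _ => false}

lemma card_nonzeroPattern : Fintype.card (NonzeroPattern n) = 2 ^ n - 1 := by
  rw [Fintype.card_subtype_compl, Fintype.card_subtype_eq, Fintype.card_fun, Fintype.card_bool,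
    Fintype.card_fin]

def selectorWeight (α : Bool → ℝ) (k : Fin n → Bool) (s : ℝ) : Fin (n + 1) → ℝ :=
  Fin.cons (α true - α false) fun i => s * if k i then -1 else 1

def selectorBias (α : Bool → ℝ) (k : Fin n → Bool) (s : ℝ) : ℝ :=
  α false + s * ∑ i, bval (k i)

lemma selector_preactivation (α : Bool → ℝ) (k : Fin n → Bool) (s : ℝ)
    (v : Fin (n + 1) → Bool) :
    ∑ i, selectorWeight α k s i * bval (v i) + selectorBias α k s =
      α (v 0) + s * hammingDist (Fin.tail v) k := by
  have hfirst : (α true - α false) * bval (v 0) + α false = α (v 0) := by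
    cases v 0 <;> simp [bval]
  rw [Fin.sum_univ_succ, hammingDist_eq_sum_bval, selectorBias, mul_add]
  simp only [selectorWeight, Fin.cons_zero, Fin.cons_succ, Fin.tail, Finset.mul_sum, mul_assoc]
  linear_combination hfirst

lemma tendsto_rbmWeight_selector (α : (Fin n → Bool) → Bool → ℝ) (B : Fin (n + 1) → ℝ) :
    Tendsto (fun s => rbmWeight (fun k : NonzeroPattern n => selectorWeight (α k.1) k.1 s)
        (fun k => selectorBias (α k.1) k.1 s) B) atBot
      (𝓝 fun v => exp (∑ i, B i * bval (v i)) *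
        if Fin.tail v = (fun _ => false) then 1 else 1 + exp (α (Fin.tail v) (v 0))) := by
  refine tendsto_pi_nhds.2 fun v => ?_
  have hfactor : ∀ k : NonzeroPattern n, Tendsto (fun s => 1 + exp
      (∑ i, selectorWeight (α k.1) k.1 s i * bval (v i) + selectorBias (α k.1) k.1 s)) atBot
      (𝓝 (if k.1 = Fin.tail v then 1 + exp (α k.1 (v 0)) else 1)) := by
    intro k
    have h := (tendsto_exp_add_mul_natCast_atBot (α k.1 (v 0))
      (hammingDist (Fin.tail v) k.1)).const_add 1
    simp only [hammingDist_eq_zero, eq_comm (a := Fin.tail v)] at h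
    simp only [selector_preactivation]
    split_ifs at h ⊢ <;> simp_all
  have hprod := (tendsto_finsetProd Finset.univ fun k _ => hfactor k).const_mul
    (exp (∑ i, B i * bval (v i)))
  rwa [prod_subtype_ne_ite (fun _ => false) (Fin.tail v) fun k => 1 + exp (α k (v 0))] at hprod

end Selector

theorem mem_RBM_of_isProb_of_pos {n m : ℕ} (hm : 2 ^ n - 1 ≤ m) {p : (Fin (n + 1) → Bool) → ℝ}
    (hp : IsProb p) (hpos : ∀ v, 0 < p v) : p ∈ RBM (n + 1) m := by
  set p₀ := p (Fin.cons false fun _ => false)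
  set B₀ := log (p (Fin.cons true fun _ => false) / p₀)
  obtain ⟨R, hR⟩ := exists_forall_one_lt_mul_exp (ι := NonzeroPattern n × Bool)
    (c := fun kb => p (Fin.cons kb.2 kb.1.1) / p₀) (r := fun kb => ∑ i, bval (kb.1.1 i))
    (fun kb => B₀ * bval kb.2) (fun _ => div_pos (hpos _) (hpos _))
    (fun kb => sum_bval_pos kb.1.2)
  set α : (Fin n → Bool) → Bool → ℝ := fun k b =>
    log (p (Fin.cons b k) / p₀ * exp (R * ∑ i, bval (k i) - B₀ * bval b) - 1)
  set B : Fin (n + 1) → ℝ := Fin.cons B₀ fun _ => -R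
  have hlimit : (fun v => exp (∑ i, B i * bval (v i)) *
      if Fin.tail v = (fun _ => false) then 1 else 1 + exp (α (Fin.tail v) (v 0))) =
      fun v => p₀⁻¹ * p v := by
    funext v
    obtain ⟨b, k, rfl⟩ : ∃ b k, v = Fin.cons b k := ⟨v 0, Fin.tail v, (Fin.cons_self_tail v).symm⟩
    have hB : ∑ i, B i * bval ((Fin.cons b k : Fin (n + 1) → Bool) i) =
        B₀ * bval b - R * ∑ i, bval (k i) := by
      simp [Fin.sum_univ_succ, B, Finset.mul_sum, sub_eq_add_neg]
    rw [Fin.tail_cons, Fin.cons_zero, hB]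
    split_ifs with hk
    · subst hk
      cases b
      · simp [bval, p₀, (hpos _).ne']
      · simpa [bval, B₀, div_eq_inv_mul] using exp_log (div_pos (hpos _) (hpos _))
    · have h := hR (⟨k, hk⟩, b)
      simp only at h
      rw [exp_log (by linarith), add_sub_cancel, mul_left_comm, ← exp_add,
        sub_add_sub_cancel', sub_self, exp_zero, mul_one, div_eq_inv_mul]
  have hsum : ∑ v, p₀⁻¹ * p v ≠ 0 := by
    rw [← Finset.mul_sum, hp.2, mul_one]
    exact inv_ne_zero (hpos _).ne'
  have h := normalized_mem_RBM_of_tendsto (card_nonzeroPattern.trans_le hm)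
    (tendsto_rbmWeight_selector α B) (hlimit ▸ hsum)
  rwa [hlimit, normalized_const_mul (inv_ne_zero (hpos _).ne'), hp.normalized_eq] at h

/-- If `m ≥ 2^(n-1) - 1`, then `RBM_{n,m}` equals the set of all probability
distributions on `{0,1}^n`: the RBM is a universal approximator. -/
theorem rbm_universal_approximation (n m : ℕ) (hm : 2 ^ (n - 1) - 1 ≤ m) :
    RBM n m = {p : (Fin n → Bool) → ℝ | IsProb p} := by
  refine (RBM_subset_setOf_isProb m).antisymm fun p hp => ?_
  cases n with
  | zero => exact subset_closure ⟨0, 0, 0, hp.eq_of_subsingleton (rbmDist_isProb m 0 0 0)⟩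
  | succ n =>
    have hpos : {q | IsProb q ∧ ∀ v, 0 < q v} ⊆ RBM (n + 1) m :=
      fun q hq => mem_RBM_of_isProb_of_pos (by simpa using hm) hq.1 hq.2
    exact closure_minimal hpos isClosed_closure hp.mem_closure_setOf_pos
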